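/- Let Δ be a finite crystallographic root system with a fixed set of positive roots Δ₊. If α ∈ Δ₊ can be written as α = γ₁ + γ₂ + ⋯ + γ_m with m ≥ 3 and each γ_i ∈ Δ₊, then there exist indices j < k in {1,…,m} such that γ_j + γ_k ∈ Δ₊. -/

import Mathlib

/-- A finite crystallographic reduced root system together with a base (set of simple
roots), the integer coordinates of every root with respect to the base, and the sign
condition singling out the positive roots. -/
structure PRS (ι M N : Type*) [Fintype ι] [AddCommGroup M] [Module ℚ M]
    [AddCommGroup N] [Module ℚ N] where
  P : RootPairing ι ℚ M N
  isRootSystem : P.IsRootSystem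
  crys : P.IsCrystallographic
  red : P.IsReduced
  base : Finset ι
  baseIndep : LinearIndependent ℚ (fun i : base => P.root i)
  coeff : ι → ι → ℤ
  coeff_supp : ∀ j i, i ∉ base → coeff j i = 0
  coeff_spec : ∀ j, P.root j = ∑ i ∈ base, (coeff j i : ℚ) • P.root i
  coeff_sign : ∀ j, (∀ i, 0 ≤ coeff j i) ∨ (∀ i, coeff j i ≤ 0)

namespace PRS

variable {ι M N : Type*} [Fintype ι] [AddCommGroup M] [Module ℚ M]
    [AddCommGroup N] [Module ℚ N] (S : PRS ι M N)

/-- The index `j` corresponds to a positive root. -/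
def IsPosIdx (j : ι) : Prop := ∀ i, 0 ≤ S.coeff j i

/-- The set of positive roots, viewed as vectors in `M`. -/
def posRoots : Set M := {v | ∃ j, S.IsPosIdx j ∧ v = S.P.root j}

/-- The height of the root indexed by `j`. -/
def ht (j : ι) : ℤ := ∑ i ∈ S.base, S.coeff j i

/-- A subset `B` of the positive roots is closed by sums if whenever `α, β ∈ B` and
`α + β` is again a (positive) root, then `α + β ∈ B`. -/
def ClosedBySums (B : Set M) : Prop :=
  ∀ α ∈ B, ∀ β ∈ B, α + β ∈ S.posRoots → α + β ∈ B

/-- A subset `A` of the positive roots is compatible if every decomposition of an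
element of `A` as the sum of two positive roots has a summand in `A`. -/
def Compatible (A : Set M) : Prop :=
  ∀ γ ∈ A, ∀ α ∈ S.posRoots, ∀ β ∈ S.posRoots, γ = α + β → α ∈ A ∨ β ∈ A

end PRS

namespace PRS

variable {ι M N : Type*} [Fintype ι] [AddCommGroup M] [Module ℚ M]
    [AddCommGroup N] [Module ℚ N] (S : PRS ι M N)

lemma coeff_eq' {c d : ι → ℚ}
    (h : ∑ b ∈ S.base, c b • S.P.root b = ∑ b ∈ S.base, d b • S.P.root b) :
    ∀ b ∈ S.base, c b = d b := by
  have hli := S.baseIndep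
  rw [Fintype.linearIndependent_iff] at hli
  intro b hb
  have h0 : ∑ i : S.base, (c i.1 - d i.1) • S.P.root i.1 = 0 := by
    simp only [sub_smul, Finset.sum_sub_distrib]
    rw [Finset.sum_coe_sort S.base (fun b => c b • S.P.root b),
        Finset.sum_coe_sort S.base (fun b => d b • S.P.root b), h, sub_self]
  have := hli (fun i => c i.1 - d i.1) h0 ⟨b, hb⟩
  simpa [sub_eq_zero] using this

lemma exists_rep {σ : Type*} (t : Finset σ) (γ : σ → M)
    (hγ : ∀ l ∈ t, γ l ∈ S.posRoots) :
    ∃ c : ι → ℚ, (∀ b, 0 ≤ c b) ∧ (∑ l ∈ t, γ l = ∑ b ∈ S.base, c b • S.P.root b) ∧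
      (t.Nonempty → ∃ b ∈ S.base, 0 < c b) := by
  choose j hj hγj using hγ
  refine ⟨fun b => ∑ l ∈ t.attach, (S.coeff (j l.1 l.2) b : ℚ), ?_, ?_, ?_⟩
  · intro b
    exact Finset.sum_nonneg fun l _ => by exact_mod_cast hj l.1 l.2 b
  · rw [← Finset.sum_attach t γ]
    calc ∑ l ∈ t.attach, γ l.1
        = ∑ l ∈ t.attach, ∑ b ∈ S.base, (S.coeff (j l.1 l.2) b : ℚ) • S.P.root b := by
          refine Finset.sum_congr rfl fun l _ => ?_
          rw [hγj l.1 l.2, S.coeff_spec]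
      _ = ∑ b ∈ S.base, ∑ l ∈ t.attach, (S.coeff (j l.1 l.2) b : ℚ) • S.P.root b :=
          Finset.sum_comm
      _ = ∑ b ∈ S.base, (∑ l ∈ t.attach, (S.coeff (j l.1 l.2) b : ℚ)) • S.P.root b := by
          refine Finset.sum_congr rfl fun b _ => (Finset.sum_smul).symm
  · rintro ⟨l0, hl0⟩
    have hroot : S.P.root (j l0 hl0) ≠ 0 := S.P.ne_zero _
    have hex : ∃ b ∈ S.base, S.coeff (j l0 hl0) b ≠ 0 := by
      by_contra hc
      push_neg at hc
      apply hroot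
      rw [S.coeff_spec]
      refine Finset.sum_eq_zero fun b hb => by rw [hc b hb]; simp
    obtain ⟨b, hb, hne⟩ := hex
    refine ⟨b, hb, ?_⟩
    have h1 : (0:ℚ) < (S.coeff (j l0 hl0) b : ℚ) := by
      have h2 := hj l0 hl0 b
      have := lt_of_le_of_ne h2 (Ne.symm hne)
      exact_mod_cast this
    calc (0:ℚ) < (S.coeff (j l0 hl0) b : ℚ) := h1
      _ ≤ ∑ l ∈ t.attach, (S.coeff (j l.1 l.2) b : ℚ) :=
        Finset.single_le_sum (f := fun l : {x // x ∈ t} => (S.coeff (j l.1 l.2) b : ℚ))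
          (fun l _ => by
            show (0:ℚ) ≤ (S.coeff (j l.1 l.2) b : ℚ)
            exact_mod_cast hj l.1 l.2 b) (Finset.mem_attach t ⟨l0, hl0⟩)

lemma isPosIdx_of_root_eq_sum {σ : Type*} {t : Finset σ} {γ : σ → M}
    (hγ : ∀ l ∈ t, γ l ∈ S.posRoots) {k : ι} (hk : S.P.root k = ∑ l ∈ t, γ l) :
    S.IsPosIdx k := by
  obtain ⟨c, hc0, hcs, -⟩ := S.exists_rep t γ hγ
  have h := S.coeff_eq' (c := fun b => (S.coeff k b : ℚ)) (d := c)
    (by rw [← S.coeff_spec k, hk, hcs])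
  intro i
  by_cases hi : i ∈ S.base
  · have h1 : (S.coeff k i : ℚ) = c i := h i hi
    have h2 : (0:ℚ) ≤ (S.coeff k i : ℚ) := by rw [h1]; exact hc0 i
    exact_mod_cast h2
  · rw [S.coeff_supp k i hi]

lemma sum_ne_zero' {σ : Type*} {t : Finset σ} (htne : t.Nonempty) {γ : σ → M}
    (hγ : ∀ l ∈ t, γ l ∈ S.posRoots) : ∑ l ∈ t, γ l ≠ 0 := by
  obtain ⟨c, hc0, hcs, hpos⟩ := S.exists_rep t γ hγ
  obtain ⟨b, hb, hbpos⟩ := hpos htne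
  intro h0
  have h := S.coeff_eq' (c := c) (d := fun _ => (0:ℚ)) (by rw [← hcs, h0]; simp)
  exact absurd (h b hb) (ne_of_gt hbpos)

set_option maxHeartbeats 2000000 in
lemma root_sub_root_mem {i j : ι} (hij : 0 < S.P.pairing i j)
    (hne : S.P.root i ≠ S.P.root j) : ∃ k, S.P.root k = S.P.root i - S.P.root j := by
  haveI := S.crys
  have hne2 : S.P.root i ≠ - S.P.root j := by
    intro h
    have h2 : S.P.pairing i j = -2 := by
      rw [← S.P.root_coroot_eq_pairing, h, LinearMap.map_neg₂,
        S.P.root_coroot_eq_pairing, S.P.pairing_same]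
    rw [h2] at hij; norm_num at hij
  have hji : 0 < S.P.pairing j i := by
    have h := S.P.zero_lt_pairingIn_iff' (S := ℚ) (i := i) (j := j)
    have e1 := S.P.algebraMap_pairingIn (S := ℚ) i j
    have e2 := S.P.algebraMap_pairingIn (S := ℚ) j i
    simp only [Algebra.algebraMap_self, RingHom.id_apply] at e1 e2
    rw [← e2]; rw [← e1] at hij; exact h.mp hij
  obtain ⟨a, ha⟩ : ∃ a : ℤ, (a : ℚ) = S.P.pairing i j := by
    simpa using RootPairing.IsValuedIn.exists_value (P := S.P) (S := ℤ) i j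
  obtain ⟨b, hb⟩ : ∃ b : ℤ, (b : ℚ) = S.P.pairing j i := by
    simpa using RootPairing.IsValuedIn.exists_value (P := S.P) (S := ℤ) j i
  set B := S.P.RootForm with hB
  set x := S.P.root i with hx
  set y := S.P.root j with hy
  have hsymm : ∀ u v : M, B u v = B v u := fun u v => by
    have := S.P.rootForm_symmetric.eq u v
    simpa using this
  have hBxx : 0 < B x x :=
    S.P.rootForm_pos_of_ne_zero (Submodule.subset_span ⟨i, rfl⟩) (S.P.ne_zero i)
  have hByy : 0 < B y y :=
    S.P.rootForm_pos_of_ne_zero (Submodule.subset_span ⟨j, rfl⟩) (S.P.ne_zero j)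
  have h2xy : 2 * B x y = S.P.pairing i j * B y y :=
    S.P.toInvariantForm.two_mul_apply_root_root i j
  have h2yx : 2 * B y x = S.P.pairing j i * B x x :=
    S.P.toInvariantForm.two_mul_apply_root_root j i
  have hzz : 0 ≤ B (B y y • x - B x y • y) (B y y • x - B x y • y) :=
    S.P.zero_le_rootForm _
  have hzz' : B (B y y • x - B x y • y) (B y y • x - B x y • y)
      = B y y * (B x x * B y y - B x y * B x y) := by
    simp only [map_sub, map_smul, LinearMap.sub_apply, LinearMap.smul_apply, smul_eq_mul]
    rw [hsymm y x]
    ring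
  have hcs : B x y * B x y ≤ B x x * B y y := by nlinarith
  rw [hsymm y x] at h2yx
  have hprod : S.P.pairing i j * S.P.pairing j i * (B x x * B y y) = 4 * (B x y * B x y) := by
    linear_combination (-(S.P.pairing j i * B x x)) * h2xy + (-(2 * B x y)) * h2yx
  have ha1 : 1 ≤ a := by
    have h0 : (0:ℚ) < (a:ℚ) := by rw [ha]; exact hij
    have : 0 < a := by exact_mod_cast h0
    omega
  have hb1 : 1 ≤ b := by
    have h0 : (0:ℚ) < (b:ℚ) := by rw [hb]; exact hji
    have : 0 < b := by exact_mod_cast h0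
    omega
  have hab4 : a * b ≤ 4 := by
    have h4 : S.P.pairing i j * S.P.pairing j i ≤ 4 := by
      nlinarith [hprod, hcs, mul_pos hBxx hByy]
    have : ((a * b : ℤ) : ℚ) ≤ (4:ℚ) := by push_cast; rw [ha, hb]; exact h4
    exact_mod_cast this
  rcases eq_or_lt_of_le hab4 with hab | hab
  · -- coxeter weight 4 : roots proportional, contradiction
    exfalso
    have heq : B x y * B x y = B x x * B y y := by
      have h4 : S.P.pairing i j * S.P.pairing j i = 4 := by
        rw [← ha, ← hb]; exact_mod_cast hab
      rw [h4] at hprod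
      linarith
    have hz0 : B (B y y • x - B x y • y) (B y y • x - B x y • y) = 0 := by
      rw [hzz', heq]; ring
    have hmem : B y y • x - B x y • y ∈ S.P.rootSpan ℚ := by
      apply Submodule.sub_mem <;>
        exact Submodule.smul_mem _ _ (Submodule.subset_span ⟨_, rfl⟩)
    have hz : B y y • x - B x y • y = 0 :=
      S.P.eq_zero_of_mem_rootSpan_of_rootForm_self_eq_zero hmem hz0
    have hdep : ¬ LinearIndependent ℚ ![S.P.root i, S.P.root j] := by
      rw [linearIndependent_fin2]
      push_neg
      intro _
      refine ⟨(B y y)⁻¹ * B x y, ?_⟩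
      show ((B y y)⁻¹ * B x y) • y = x
      have hzz2 : B y y • x = B x y • y := by rw [sub_eq_zero] at hz; exact hz
      rw [mul_smul, ← hzz2, smul_smul, inv_mul_cancel₀ (ne_of_gt hByy), one_smul]
    rcases S.red.eq_or_eq_neg i j hdep with h | h
    · exact hne h
    · exact hne2 h
  · have hab3 : a * b ≤ 3 := by omega
    have hone : a = 1 ∨ b = 1 := by
      by_contra hcon
      push_neg at hcon
      have ha2 : 2 ≤ a := by omega
      have hb2 : 2 ≤ b := by omega
      nlinarith
    rcases hone with h1 | h1
    · refine ⟨S.P.reflectionPerm j i, ?_⟩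
      rw [S.P.root_reflectionPerm, S.P.reflection_apply_root, ← ha, h1]
      push_cast
      rw [one_smul]
    · refine ⟨S.P.reflectionPerm (S.P.reflectionPerm i j) (S.P.reflectionPerm i j), ?_⟩
      rw [S.P.root_reflectionPerm, S.P.reflection_apply_self, S.P.root_reflectionPerm,
        S.P.reflection_apply_root, ← hb, h1]
      push_cast
      rw [one_smul, neg_sub]

set_option maxHeartbeats 2000000 in
lemma aux {σ : Type*} [DecidableEq σ] : ∀ (n : ℕ) (t : Finset σ) (γ : σ → M), t.card = n → 2 ≤ n →
    (∀ l ∈ t, γ l ∈ S.posRoots) → ∀ α ∈ S.posRoots, α = ∑ l ∈ t, γ l →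
    ∃ j ∈ t, ∃ k ∈ t, j ≠ k ∧ γ j + γ k ∈ S.posRoots := by
  intro n
  induction n with
  | zero => intro t γ _ h2; omega
  | succ n ih =>
    intro t γ hcard h2 hγ α hα hsum
    haveI := S.crys
    rcases eq_or_lt_of_le h2 with h2' | h3
    · have hc2 : t.card = 2 := by omega
      obtain ⟨j, k, hjk, ht⟩ := Finset.card_eq_two.mp hc2
      rw [ht, Finset.sum_pair hjk] at hsum
      exact ⟨j, by simp [ht], k, by simp [ht], hjk, hsum ▸ hα⟩
    · obtain ⟨iα, hiα, hαr⟩ := hα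
      have hpair2 : S.P.coroot' iα α = 2 := by
        rw [hαr, S.P.root_coroot'_eq_pairing, S.P.pairing_same]
      have h2sum : (2:ℚ) = ∑ l ∈ t, S.P.coroot' iα (γ l) := by
        rw [← hpair2, hsum, map_sum]
      obtain ⟨l, hl, hlpos⟩ : ∃ l ∈ t, 0 < S.P.coroot' iα (γ l) := by
        by_contra hcon
        push_neg at hcon
        have hle := Finset.sum_nonpos hcon
        rw [← h2sum] at hle
        norm_num at hle
      obtain ⟨jl, hjl, hγl⟩ := hγ l hl
      have hpij : 0 < S.P.pairing jl iα := by
        rw [← S.P.root_coroot'_eq_pairing]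
        rw [hγl] at hlpos
        exact hlpos
      have hpair : 0 < S.P.pairing iα jl := by
        have h := S.P.zero_lt_pairingIn_iff' (S := ℚ) (i := jl) (j := iα)
        have e1 := S.P.algebraMap_pairingIn (S := ℚ) jl iα
        have e2 := S.P.algebraMap_pairingIn (S := ℚ) iα jl
        simp only [Algebra.algebraMap_self, RingHom.id_apply] at e1 e2
        rw [← e2]; rw [← e1] at hpij; exact h.mp hpij
      have hterase : (t.erase l).Nonempty := by
        rw [← Finset.card_pos, Finset.card_erase_of_mem hl]
        omega
      have hγe : ∀ p ∈ t.erase l, γ p ∈ S.posRoots :=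
        fun p hp => hγ p (Finset.mem_of_mem_erase hp)
      have hsplit : α = γ l + ∑ p ∈ t.erase l, γ p := by
        rw [hsum, Finset.add_sum_erase t γ hl]
      have hαγ : S.P.root iα ≠ S.P.root jl := by
        intro he
        apply S.sum_ne_zero' hterase hγe
        have : α = γ l := by rw [hαr, hγl, he]
        have h0 : γ l = γ l + ∑ p ∈ t.erase l, γ p := this ▸ hsplit
        exact (left_eq_add.mp h0)
      obtain ⟨k, hk⟩ := S.root_sub_root_mem hpair hαγ
      have hksum : S.P.root k = ∑ p ∈ t.erase l, γ p := by
        rw [hk, ← hαr, ← hγl]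
        rw [hsplit]
        abel
      have hkpos : S.P.root k ∈ S.posRoots :=
        ⟨k, S.isPosIdx_of_root_eq_sum hγe hksum, rfl⟩
      obtain ⟨j', hj', k', hk', hne', hsum'⟩ :=
        ih (t.erase l) γ (by rw [Finset.card_erase_of_mem hl, hcard]; omega) (by omega)
          hγe _ hkpos hksum
      exact ⟨j', Finset.mem_of_mem_erase hj', k', Finset.mem_of_mem_erase hk', hne', hsum'⟩

end PRS

open PRS Finset in
theorem stmt0 {ι M N : Type*} [Fintype ι] [AddCommGroup M] [Module ℚ M]
    [AddCommGroup N] [Module ℚ N] (S : PRS ι M N)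
    (α : M) (hα : α ∈ S.posRoots) (m : ℕ) (hm : 3 ≤ m)
    (γ : Fin m → M) (hγ : ∀ i, γ i ∈ S.posRoots) (hsum : α = ∑ i, γ i) :
    ∃ j k : Fin m, j < k ∧ γ j + γ k ∈ S.posRoots := by
  obtain ⟨j, -, k, -, hne, hpos⟩ :=
    S.aux m Finset.univ γ (by simp) (by omega) (fun l _ => hγ l) α hα (by simpa using hsum)
  rcases lt_or_gt_of_ne hne with h | h
  · exact ⟨j, k, h, hpos⟩
  · exact ⟨k, j, h, by rwa [add_comm]⟩
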